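/- For every strictly increasing sequence α with α_n > 1 and α_n → ∞, the Cesàro operator C : Λ₀(α) → Λ₀(α) is not a compact operator; that is, there is no neighborhood U of 0 in Λ₀(α) such that C(U) is relatively compact in Λ₀(α). Equivalently, for every k ≥ 1 the image under C of the set {x ∈ Λ₀(α) : p_k(x) ≤ 1} is not relatively compact in Λ₀(α). -/

import Mathlib

open Filter Finset Topology

noncomputable section

/-- The weight `w_k(n) = e^{-alpha_n / k}`.  Indices are shifted by one: the natural
numbers `k n : Nat` represent the indices `k+1` and `n+1` (both running from `1`). -/
def wt (a : ℕ → ℝ) (k n : ℕ) : ℝ := Real.exp (-(a n) / ((k : ℝ) + 1))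

/-- Membership in the power series space of finite type `Λ₀(α)`:
`x ∈ Λ₀(α)` iff `w_k(n)|x_n| → 0` for every `k ≥ 1`. -/
def memLambda (a : ℕ → ℝ) (x : ℕ → ℂ) : Prop :=
  ∀ k : ℕ, Tendsto (fun n => wt a k n * ‖x n‖) atTop (𝓝 0)

/-- The norm `p_k(x) = sup_n w_k(n)|x_n|` generating the Fréchet topology of `Λ₀(α)`. -/
def pk (a : ℕ → ℝ) (k : ℕ) (x : ℕ → ℂ) : ℝ := ⨆ n : ℕ, wt a k n * ‖x n‖

/-- The discrete Cesàro operator `(C x)_n = (x_1 + ⋯ + x_n)/n` (0-indexed). -/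
def cesaro (x : ℕ → ℂ) : ℕ → ℂ := fun n => (∑ i ∈ Finset.range (n + 1), x i) / ((n : ℂ) + 1)

/-- A subset `S` of `Λ₀(α)` is relatively compact.  Since `Λ₀(α)` is a Fréchet
(hence complete metrizable) space, this is equivalent to total boundedness with
respect to the generating norms `p_k`. -/
def RelCompact (a : ℕ → ℝ) (S : Set (ℕ → ℂ)) : Prop :=
  ∀ k : ℕ, ∀ ε : ℝ, 0 < ε → ∃ F : Finset (ℕ → ℂ), (∀ y ∈ F, memLambda a y) ∧
    ∀ x ∈ S, ∃ y ∈ F, pk a k (x - y) < ε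

/-!
If `C` were compact, the image of the ball `{p_k ≤ ε}` would be bounded for `p_{k+1}`.
Testing this on `x = ε / w_k` on `{0, …, n}` (zero afterwards), whose Cesàro mean at `n` is
`ε/(n+1) · ∑_{i ≤ n} e^{β_i}` with `β = α/(k+1)`, gives
`∑_{i ≤ n} e^{β_i} ≤ B (n+1) e^{t β_n}` with `t = (k+1)/(k+2) < 1`.
The last term alone gives `β_n = O(log n)`, and the block `m ≤ i ≤ 2m` gives
`β_m ≤ t β_{2m} + log (3B)`; iterating the latter shows that `β` is bounded, contradicting
`α → ∞`.
-/

section DoublingBound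

variable {β : ℕ → ℝ} {t c : ℝ}

theorem le_pow_mul_two_pow_mul_add (ht0 : 0 ≤ t) (ht1 : t < 1) (hc : 0 ≤ c)
    (hdouble : ∀ m, β m ≤ t * β (2 * m) + c) (j m : ℕ) :
    β m ≤ t ^ j * β (2 ^ j * m) + c / (1 - t) := by
  have h1t : 0 < 1 - t := by linarith
  induction j generalizing m with
  | zero => simpa using div_nonneg hc h1t.le
  | succ j ih =>
    calc β m ≤ t * β (2 * m) + c := hdouble m
      _ ≤ t * (t ^ j * β (2 ^ j * (2 * m)) + c / (1 - t)) + c := by gcongr; exact ih _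
      _ = t ^ (j + 1) * β (2 ^ (j + 1) * m) + c / (1 - t) := by
        rw [show 2 ^ j * (2 * m) = 2 ^ (j + 1) * m by ring]
        field_simp
        ring

/-- Iterating the doubling inequality `j` times costs a factor `t ^ j`, which beats the
growth of `β (2 ^ j m)`, linear in `j`. -/
theorem le_div_one_sub_of_le_mul_two_mul_add {A D : ℝ} (ht0 : 0 ≤ t) (ht1 : t < 1)
    (hc : 0 ≤ c) (hD : 0 ≤ D) (hdouble : ∀ m, β m ≤ t * β (2 * m) + c)
    (hlog : ∀ n : ℕ, β n ≤ A + D * Real.log (n + 1)) (m : ℕ) :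
    β m ≤ c / (1 - t) := by
  have hgrowth : ∀ j : ℕ, β (2 ^ j * m) ≤ A + D * Real.log (m + 1) + D * Real.log 2 * j := by
    intro j
    have hle : ((2 ^ j * m : ℕ) : ℝ) + 1 ≤ (m + 1) * 2 ^ j := by
      push_cast
      nlinarith [one_le_pow₀ (M₀ := ℝ) (by norm_num : (1 : ℝ) ≤ 2) (n := j)]
    calc β (2 ^ j * m) ≤ A + D * Real.log (((2 ^ j * m : ℕ) : ℝ) + 1) := hlog _
      _ ≤ A + D * Real.log ((m + 1) * 2 ^ j) := by gcongr
      _ = A + D * Real.log (m + 1) + D * Real.log 2 * j := by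
        rw [Real.log_mul (by positivity) (by positivity), Real.log_pow]
        ring
  have hlim : Tendsto (fun j : ℕ => t ^ j * (A + D * Real.log (m + 1) + D * Real.log 2 * j))
      atTop (𝓝 0) := by
    have hpow := tendsto_pow_atTop_nhds_zero_of_lt_one ht0 ht1
    have hjpow := tendsto_self_mul_const_pow_of_lt_one ht0 ht1
    convert (hpow.const_mul (A + D * Real.log (m + 1))).add (hjpow.const_mul (D * Real.log 2))
      using 2 <;> ring
  refine sub_nonpos.1 (ge_of_tendsto' hlim fun j => ?_)
  have := le_pow_mul_two_pow_mul_add ht0 ht1 hc hdouble j m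
  have := mul_le_mul_of_nonneg_left (hgrowth j) (pow_nonneg ht0 j)
  linarith

end DoublingBound

theorem bddAbove_range_of_sum_exp_le {β : ℕ → ℝ} (hβ : Monotone β) {t B : ℝ} (ht0 : 0 ≤ t)
    (ht1 : t < 1) (hB : 1 ≤ B)
    (hsum : ∀ n : ℕ, ∑ i ∈ range (n + 1), Real.exp (β i) ≤ B * (n + 1) * Real.exp (t * β n)) :
    BddAbove (Set.range β) := by
  have h1t : 0 < 1 - t := by linarith
  have hlog : ∀ n : ℕ, β n ≤ Real.log B / (1 - t) + 1 / (1 - t) * Real.log (n + 1) := by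
    intro n
    have hlast : Real.exp (β n) ≤ B * (n + 1) * Real.exp (t * β n) :=
      (single_le_sum (fun i _ => (Real.exp_pos (β i)).le) (self_mem_range_succ n)).trans
        (hsum n)
    have : (1 - t) * β n ≤ Real.log B + Real.log (n + 1) := by
      rw [← Real.log_mul (by positivity) (by positivity), Real.le_log_iff_exp_le (by positivity),
        sub_mul, one_mul, Real.exp_sub, div_le_iff₀ (Real.exp_pos _)]
      exact hlast
    calc β n = (1 - t) * β n / (1 - t) := by field_simp
      _ ≤ (Real.log B + Real.log (n + 1)) / (1 - t) := by gcongr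
      _ = Real.log B / (1 - t) + 1 / (1 - t) * Real.log (n + 1) := by ring
  have hdouble : ∀ m, β m ≤ t * β (2 * m) + Real.log (3 * B) := by
    intro m
    have hmid : ((m : ℝ) + 1) * Real.exp (β m) ≤ ∑ i ∈ range (2 * m + 1), Real.exp (β i) := by
      calc ((m : ℝ) + 1) * Real.exp (β m) = #(Ico m (2 * m + 1)) • Real.exp (β m) := by
            rw [Nat.card_Ico, show 2 * m + 1 - m = m + 1 by omega, nsmul_eq_mul]
            push_cast; ring
        _ ≤ ∑ i ∈ Ico m (2 * m + 1), Real.exp (β i) :=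
            card_nsmul_le_sum _ _ _ fun i hi => Real.exp_le_exp.2 (hβ (mem_Ico.1 hi).1)
        _ ≤ ∑ i ∈ range (2 * m + 1), Real.exp (β i) :=
            sum_le_sum_of_subset_of_nonneg (fun i hi => mem_range.2 (mem_Ico.1 hi).2)
              fun i _ _ => (Real.exp_pos _).le
    have hexp : Real.exp (β m) ≤ 3 * B * Real.exp (t * β (2 * m)) := by
      have := hmid.trans (hsum (2 * m))
      push_cast at this
      nlinarith [Real.exp_pos (t * β (2 * m)), Real.exp_pos (β m)]
    have : β m - t * β (2 * m) ≤ Real.log (3 * B) := by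
      rw [Real.le_log_iff_exp_le (by positivity), Real.exp_sub, div_le_iff₀ (Real.exp_pos _)]
      exact hexp
    linarith
  exact ⟨_, Set.forall_mem_range.2 <| le_div_one_sub_of_le_mul_two_mul_add ht0 ht1
    (Real.log_nonneg (by linarith)) (by positivity) hdouble hlog⟩

theorem norm_cesaro (x : ℕ → ℂ) (n : ℕ) :
    ‖cesaro x n‖ = ‖∑ i ∈ range (n + 1), x i‖ / (n + 1) := by
  rw [cesaro, norm_div, ← Nat.cast_add_one, Complex.norm_natCast, Nat.cast_add_one]

theorem wt_pos (a : ℕ → ℝ) (k n : ℕ) : 0 < wt a k n := Real.exp_pos _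

theorem wt_antitone {a : ℕ → ℝ} (ha : Monotone a) (k : ℕ) : Antitone (wt a k) :=
  fun _ _ hij =>
    Real.exp_le_exp.2 <| div_le_div_of_nonneg_right (neg_le_neg (ha hij)) (by positivity)

theorem pk_nonneg (a : ℕ → ℝ) (k : ℕ) (x : ℕ → ℂ) : 0 ≤ pk a k x :=
  Real.iSup_nonneg fun _ => mul_nonneg (wt_pos a k _).le (norm_nonneg _)

namespace memLambda

variable {a : ℕ → ℝ} {x y : ℕ → ℂ}

theorem le_pk (hx : memLambda a x) (k n : ℕ) : wt a k n * ‖x n‖ ≤ pk a k x :=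
  le_ciSup (hx k).bddAbove_range n

theorem sub (hx : memLambda a x) (hy : memLambda a y) : memLambda a (x - y) := by
  intro k
  refine squeeze_zero (fun n => mul_nonneg (wt_pos a k _).le (norm_nonneg _)) (fun n => ?_)
    (by simpa using (hx k).add (hy k))
  rw [Pi.sub_apply, ← mul_add]
  exact mul_le_mul_of_nonneg_left (norm_sub_le _ _) (wt_pos a k n).le

theorem cesaro (ha : Monotone a) (hx : memLambda a x) : memLambda a (cesaro x) := by
  intro k
  have hmean := (hx k).cesaro.comp (tendsto_add_atTop_nat 1)
  refine squeeze_zero (fun n => mul_nonneg (wt_pos a k _).le (norm_nonneg _)) (fun n => ?_)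
    hmean
  have hw := (wt_pos a k n).le
  calc wt a k n * ‖_root_.cesaro x n‖
      = ((n + 1 : ℕ) : ℝ)⁻¹ * (wt a k n * ‖∑ i ∈ range (n + 1), x i‖) := by
        rw [norm_cesaro]; push_cast; ring
    _ ≤ ((n + 1 : ℕ) : ℝ)⁻¹ * ∑ i ∈ range (n + 1), wt a k i * ‖x i‖ := by
        grw [norm_sum_le, mul_sum]
        gcongr with i hi
        exact wt_antitone ha k (Nat.lt_succ_iff.1 (mem_range.1 hi))

end memLambda

theorem RelCompact.exists_bound {a : ℕ → ℝ} {S : Set (ℕ → ℂ)} (hS : RelCompact a S)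
    (hSΛ : ∀ x ∈ S, memLambda a x) (k : ℕ) :
    ∃ M, ∀ x ∈ S, ∀ n, wt a k n * ‖x n‖ ≤ M := by
  obtain ⟨F, hFΛ, hnet⟩ := hS k 1 one_pos
  refine ⟨1 + ∑ y ∈ F, pk a k y, fun x hx n => ?_⟩
  obtain ⟨y, hy, hxy⟩ := hnet x hx
  have hwxy := ((hSΛ x hx).sub (hFΛ y hy)).le_pk k n
  have hwy := (hFΛ y hy).le_pk k n
  have hpky : pk a k y ≤ ∑ z ∈ F, pk a k z := single_le_sum (fun z _ => pk_nonneg a k z) hy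
  have hnorm : ‖x n‖ ≤ ‖(x - y) n‖ + ‖y n‖ := by
    simpa using norm_add_le (x n - y n) (y n)
  calc wt a k n * ‖x n‖ ≤ wt a k n * ‖(x - y) n‖ + wt a k n * ‖y n‖ := by
        rw [← mul_add]; exact mul_le_mul_of_nonneg_left hnorm (wt_pos a k n).le
    _ ≤ pk a k (x - y) + pk a k y := add_le_add hwxy hwy
    _ ≤ 1 + ∑ z ∈ F, pk a k z := add_le_add hxy.le hpky

theorem memLambda_of_eventually_eq_zero {a : ℕ → ℝ} {x : ℕ → ℂ}
    (hx : ∀ᶠ n in atTop, x n = 0) : memLambda a x := fun _ =>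
  tendsto_const_nhds.congr' <| by filter_upwards [hx] with n hn; simp [hn]

def wtInvTrunc (a : ℕ → ℝ) (k m : ℕ) (ε : ℝ) : ℕ → ℂ :=
  fun i => if i ≤ m then ((ε / wt a k i : ℝ) : ℂ) else 0

section wtInvTrunc

variable {a : ℕ → ℝ} {k m : ℕ} {ε : ℝ}

theorem memLambda_wtInvTrunc : memLambda a (wtInvTrunc a k m ε) :=
  memLambda_of_eventually_eq_zero <| by
    filter_upwards [eventually_gt_atTop m] with i hi
    simp [wtInvTrunc, hi.not_ge]

theorem pk_wtInvTrunc_le (hε : 0 ≤ ε) : pk a k (wtInvTrunc a k m ε) ≤ ε := by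
  refine ciSup_le fun i => ?_
  have hw := wt_pos a k i
  unfold wtInvTrunc
  split_ifs
  · rw [Complex.norm_real, Real.norm_of_nonneg (by positivity), mul_div_cancel₀ _ hw.ne']
  · simpa using hε

theorem cesaro_wtInvTrunc_self (n : ℕ) :
    cesaro (wtInvTrunc a k n ε) n =
      (((ε * ∑ i ∈ range (n + 1), (wt a k i)⁻¹) / (n + 1) : ℝ) : ℂ) := by
  unfold cesaro wtInvTrunc
  rw [sum_congr rfl fun i hi => if_pos (Nat.lt_succ_iff.1 (mem_range.1 hi)), mul_sum]
  push_cast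
  simp only [div_eq_mul_inv]

end wtInvTrunc

theorem sum_exp_le_of_wt_mul_norm_cesaro_le {a : ℕ → ℝ} {k n : ℕ} {ε M : ℝ} (hε : 0 < ε)
    (h : wt a (k + 1) n * ‖cesaro (wtInvTrunc a k n ε) n‖ ≤ M) :
    ∑ i ∈ range (n + 1), Real.exp (a i / (k + 1)) ≤
      M / ε * (n + 1) * Real.exp ((k + 1) / (k + 2) * (a n / (k + 1))) := by
  have hwk : ∀ i, (wt a k i)⁻¹ = Real.exp (a i / (k + 1)) := fun i => by
    rw [wt, ← Real.exp_neg, neg_div, neg_neg]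
  have hwk1 : wt a (k + 1) n = (Real.exp ((k + 1) / (k + 2) * (a n / (k + 1))))⁻¹ := by
    rw [wt, ← Real.exp_neg]
    push_cast
    field_simp
    ring_nf
  rw [cesaro_wtInvTrunc_self, Complex.norm_real, hwk1] at h
  simp only [hwk] at h
  rw [Real.norm_of_nonneg (by positivity), inv_mul_le_iff₀ (Real.exp_pos _),
    div_le_iff₀ (by positivity)] at h
  rw [div_mul_eq_mul_div, div_mul_eq_mul_div, le_div_iff₀ hε]
  linarith

theorem stmt2_general (a : ℕ → ℝ) (hmono : StrictMono a)
    (htop : Tendsto a atTop atTop) :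
    ∀ k : ℕ, ∀ ε : ℝ, 0 < ε →
      ¬ RelCompact a (cesaro '' {x : ℕ → ℂ | memLambda a x ∧ pk a k x ≤ ε}) := by
  intro k ε hε hRC
  obtain ⟨M, hM⟩ := hRC.exists_bound
    (by rintro _ ⟨x, ⟨hx, -⟩, rfl⟩; exact hx.cesaro hmono.monotone) (k + 1)
  have hsum (n : ℕ) : ∑ i ∈ range (n + 1), Real.exp (a i / (k + 1)) ≤
      max (M / ε) 1 * (n + 1) * Real.exp ((k + 1) / (k + 2) * (a n / (k + 1))) := by
    have hpeak :=
      hM _ ⟨wtInvTrunc a k n ε, ⟨memLambda_wtInvTrunc, pk_wtInvTrunc_le hε.le⟩, rfl⟩ n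
    grw [sum_exp_le_of_wt_mul_norm_cesaro_le hε hpeak, ← le_max_left]
  have hk : (0 : ℝ) < k + 1 := by positivity
  have hβ : Monotone fun n => a n / (k + 1) := fun _ _ hij =>
    div_le_div_of_nonneg_right (hmono.monotone hij) hk.le
  exact not_bddAbove_of_tendsto_atTop (htop.atTop_div_const hk) <|
    bddAbove_range_of_sum_exp_le hβ (by positivity) ((div_lt_one (by positivity)).2 (by linarith))
      (le_max_right _ _) hsum

/-- the Cesàro operator on `Λ₀(α)` is not compact: for every `k` and
every `ε > 0`, the image under `C` of the set `{x ∈ Λ₀(α) : p_k(x) ≤ ε}` (these sets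
form a basis of neighbourhoods of `0`) is not relatively compact in `Λ₀(α)`. -/
theorem stmt2 (a : ℕ → ℝ) (hmono : StrictMono a) (h1 : ∀ n, 1 < a n)
    (htop : Tendsto a atTop atTop) :
    ∀ k : ℕ, ∀ ε : ℝ, 0 < ε →
      ¬ RelCompact a (cesaro '' {x : ℕ → ℂ | memLambda a x ∧ pk a k x ≤ ε}) :=
  stmt2_general a hmono htop
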